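/- arXiv:1612.04859 — 2 statements merged into one kernel-verified Lean document; each statement's English description precedes it below -/
import Mathlib

section
/- Let u : ℝ × ℝ → ℝ be a smooth function of (t,x) satisfying the Fornberg–Whitham equation u_t − u_{txx} − u·u_{xxx} − 3·u_x·u_{xx} + u·u_x + u_x = 0 at every point of ℝ². Then the nontrivial local conservation law ∂_t( u − (5/3)·t·u_t ) + ∂_x( −(2/3)·( u + (1/2)u² − u·u_{xx} − u_x² − u_{tx} ) − (5/3)·t·( u_t + u·u_t − u_t·u_{xx} − 2·u_x·u_{tx} − u·u_{txx} − u_{ttx} ) ) = 0 holds at every point of ℝ². -/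
/-- Partial derivative with respect to the first (time) variable. -/
noncomputable def pt (f : ℝ × ℝ → ℝ) : ℝ × ℝ → ℝ :=
  fun q => deriv (fun s => f (s, q.2)) q.1

/-- Partial derivative with respect to the second (space) variable. -/
noncomputable def px (f : ℝ × ℝ → ℝ) : ℝ × ℝ → ℝ :=
  fun q => deriv (fun s => f (q.1, s)) q.2


section Tool
variable {f : ℝ × ℝ → ℝ}

lemma pt_eq (hf : ContDiff ℝ (⊤ : ℕ∞) f) : pt f = fun q => fderiv ℝ f q (1, 0) := by
  funext q
  have hg : HasDerivAt (fun s : ℝ => ((s, q.2) : ℝ × ℝ)) ((1 : ℝ), (0 : ℝ)) q.1 :=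
    (hasDerivAt_id q.1).prodMk (hasDerivAt_const q.1 q.2)
  have h := ((hf.differentiable (by simp) (q.1, q.2)).hasFDerivAt).comp_hasDerivAt q.1 hg
  exact h.deriv

lemma px_eq (hf : ContDiff ℝ (⊤ : ℕ∞) f) : px f = fun q => fderiv ℝ f q (0, 1) := by
  funext q
  have hg : HasDerivAt (fun s : ℝ => ((q.1, s) : ℝ × ℝ)) ((0 : ℝ), (1 : ℝ)) q.2 :=
    (hasDerivAt_const q.2 q.1).prodMk (hasDerivAt_id q.2)
  have h := ((hf.differentiable (by simp) (q.1, q.2)).hasFDerivAt).comp_hasDerivAt q.2 hg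
  exact h.deriv

lemma contDiff_pt (hf : ContDiff ℝ (⊤ : ℕ∞) f) : ContDiff ℝ (⊤ : ℕ∞) (pt f) := by
  rw [pt_eq hf]
  exact (hf.fderiv_right (by simp)).clm_apply contDiff_const

lemma contDiff_px (hf : ContDiff ℝ (⊤ : ℕ∞) f) : ContDiff ℝ (⊤ : ℕ∞) (px f) := by
  rw [px_eq hf]
  exact (hf.fderiv_right (by simp)).clm_apply contDiff_const

lemma hasDerivAt_pt (hf : ContDiff ℝ (⊤ : ℕ∞) f) (q : ℝ × ℝ) :
    HasDerivAt (fun s => f (s, q.2)) (pt f q) q.1 := by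
  have h : DifferentiableAt ℝ (fun s : ℝ => f (s, q.2)) q.1 :=
    (hf.differentiable (by simp) (q.1, q.2)).comp q.1
      (differentiableAt_id.prodMk (differentiableAt_const _))
  exact h.hasDerivAt

lemma hasDerivAt_px (hf : ContDiff ℝ (⊤ : ℕ∞) f) (q : ℝ × ℝ) :
    HasDerivAt (fun s => f (q.1, s)) (px f q) q.2 := by
  have h : DifferentiableAt ℝ (fun s : ℝ => f (q.1, s)) q.2 :=
    (hf.differentiable (by simp) (q.1, q.2)).comp q.2
      ((differentiableAt_const _).prodMk differentiableAt_id)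
  exact h.hasDerivAt

lemma pt_px_comm (hf : ContDiff ℝ (⊤ : ℕ∞) f) : pt (px f) = px (pt f) := by
  funext q
  have hdf : ContDiff ℝ (⊤ : ℕ∞) (fderiv ℝ f) := hf.fderiv_right (by simp)
  have key : ∀ v w : ℝ × ℝ, fderiv ℝ (fun y => fderiv ℝ f y v) q w
      = fderiv ℝ (fderiv ℝ f) q w v := by
    intro v w
    rw [fderiv_clm_apply (hdf.differentiable (by simp) q) (differentiableAt_const v)]
    simp
  have hsymm := second_derivative_symmetric (f := f) (f' := fderiv ℝ f)
      (f'' := fderiv ℝ (fderiv ℝ f) q)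
      (fun y => (hf.differentiable (by simp) y).hasFDerivAt)
      ((hdf.differentiable (by simp) q).hasFDerivAt) ((1 : ℝ), (0 : ℝ)) ((0 : ℝ), (1 : ℝ))
  rw [pt_eq (contDiff_px hf), px_eq (contDiff_pt hf), px_eq hf, pt_eq hf]
  simp only []
  rw [key, key]
  exact hsymm



/-- If a smooth `u` solves the Fornberg–Whitham equation everywhere, then the
nontrivial local conservation law holds everywhere. -/
theorem fw_conservation_law (u : ℝ × ℝ → ℝ) (hu : ContDiff ℝ (⊤ : ℕ∞) u)
    (hfw : ∀ p : ℝ × ℝ,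
      pt u p - pt (px (px u)) p - u p * px (px (px u)) p
        - 3 * px u p * px (px u) p + u p * px u p + px u p = 0) :
    ∀ p : ℝ × ℝ,
      pt (fun q => u q - (5 / 3) * q.1 * pt u q) p
        + px (fun q => -(2 / 3) * (u q + (1 / 2) * u q ^ 2 - u q * px (px u) q
              - (px u q) ^ 2 - pt (px u) q)
            - (5 / 3) * q.1 * (pt u q + u q * pt u q - pt u q * px (px u) q
              - 2 * px u q * pt (px u) q - u q * pt (px (px u)) q - pt (pt (px u)) q)) p = 0 := by
  intro p
  have hux : ContDiff ℝ (⊤ : ℕ∞) (px u) := contDiff_px hu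
  have huxx : ContDiff ℝ (⊤ : ℕ∞) (px (px u)) := contDiff_px hux
  have huxxx : ContDiff ℝ (⊤ : ℕ∞) (px (px (px u))) := contDiff_px huxx
  have hut : ContDiff ℝ (⊤ : ℕ∞) (pt u) := contDiff_pt hu
  have hutx : ContDiff ℝ (⊤ : ℕ∞) (pt (px u)) := contDiff_pt hux
  have hutxx : ContDiff ℝ (⊤ : ℕ∞) (pt (px (px u))) := contDiff_pt huxx
  have huttx : ContDiff ℝ (⊤ : ℕ∞) (pt (pt (px u))) := contDiff_pt hutx
  -- time derivative of the density
  have hA := (hasDerivAt_pt hu p).sub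
      (((hasDerivAt_id p.1).const_mul ((5:ℝ)/3)).mul (hasDerivAt_pt hut p))
  have eA : pt (fun q => u q - (5 / 3) * q.1 * pt u q) p
      = pt u p - (5 / 3 * 1 * pt u p + 5 / 3 * p.1 * pt (pt u) p) := hA.deriv
  -- space derivative of the flux
  have hX := (((((hasDerivAt_px hu p).add
      (((hasDerivAt_px hu p).pow 2).const_mul ((1:ℝ)/2))).sub
      ((hasDerivAt_px hu p).mul (hasDerivAt_px huxx p))).sub
      ((hasDerivAt_px hux p).pow 2)).sub
      (hasDerivAt_px hutx p))
  have hY := ((((((hasDerivAt_px hut p).add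
      ((hasDerivAt_px hu p).mul (hasDerivAt_px hut p))).sub
      ((hasDerivAt_px hut p).mul (hasDerivAt_px huxx p))).sub
      (((hasDerivAt_px hux p).const_mul (2:ℝ)).mul (hasDerivAt_px hutx p))).sub
      ((hasDerivAt_px hu p).mul (hasDerivAt_px hutxx p))).sub
      (hasDerivAt_px huttx p))
  have hB := (hX.const_mul (-((2:ℝ)/3))).sub (hY.const_mul (5/3 * p.1))
  have eB : px (fun q => -(2 / 3) * (u q + (1 / 2) * u q ^ 2 - u q * px (px u) q
              - (px u q) ^ 2 - pt (px u) q)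
            - (5 / 3) * q.1 * (pt u q + u q * pt u q - pt u q * px (px u) q
              - 2 * px u q * pt (px u) q - u q * pt (px (px u)) q - pt (pt (px u)) q)) p
      = _ := hB.deriv
  -- time derivative of the PDE
  have hE := ((((((hasDerivAt_pt hut p).sub (hasDerivAt_pt hutxx p)).sub
      ((hasDerivAt_pt hu p).mul (hasDerivAt_pt huxxx p))).sub
      (((hasDerivAt_pt hux p).const_mul (3:ℝ)).mul (hasDerivAt_pt huxx p))).add
      ((hasDerivAt_pt hu p).mul (hasDerivAt_pt hux p))).add
      (hasDerivAt_pt hux p))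
  have hE0 := hE.congr_of_eventuallyEq
      (Filter.Eventually.of_forall fun s => (hfw (s, p.2)).symm)
  have H := hE0.unique (hasDerivAt_const p.1 (0:ℝ))
  -- commutation of partial derivatives
  have cc1 : px (pt u) = pt (px u) := (pt_px_comm hu).symm
  have cc2 : px (pt (px u)) = pt (px (px u)) := (pt_px_comm hux).symm
  have cc3 : px (pt (px (px u))) = pt (px (px (px u))) := (pt_px_comm huxx).symm
  have cc4 : px (pt (pt (px u))) = pt (pt (px (px u))) := by
    rw [← pt_px_comm hutx, ← pt_px_comm hux]
  rw [eA, eB, cc1, cc2, cc3, cc4]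
  linear_combination (-(2/3 : ℝ)) * hfw p - (5/3 * p.1) * H
end Tool
end

section
/- Let u : ℝ × ℝ → ℝ be a smooth function of (t,x) satisfying the short pulse equation u_{tx} − u − (1/2)·u²·u_{xx} − u·u_x² = 0 at every point of ℝ². Then the local conservation law ∂_t( u² ) − (1/4)·∂_x( u⁴ + (u²·u_x − 2·u_t)² ) = 0 holds at every point of ℝ². -/
lemma pt_hasDerivAt' (f : ℝ × ℝ → ℝ) (hf : Differentiable ℝ f) (p : ℝ × ℝ) :
    HasDerivAt (fun s => f (s, p.2)) (fderiv ℝ f p ((1 : ℝ), (0 : ℝ))) p.1 := by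
  have h1 : HasDerivAt (fun s : ℝ => (s, p.2)) ((1 : ℝ), (0 : ℝ)) p.1 :=
    (hasDerivAt_id p.1).prodMk (hasDerivAt_const _ _)
  have h2 : HasFDerivAt f (fderiv ℝ f p) (p.1, p.2) := by
    simpa using (hf p).hasFDerivAt
  simpa [Function.comp_def] using h2.comp_hasDerivAt p.1 h1

lemma px_hasDerivAt' (f : ℝ × ℝ → ℝ) (hf : Differentiable ℝ f) (p : ℝ × ℝ) :
    HasDerivAt (fun s => f (p.1, s)) (fderiv ℝ f p ((0 : ℝ), (1 : ℝ))) p.2 := by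
  have h1 : HasDerivAt (fun s : ℝ => (p.1, s)) ((0 : ℝ), (1 : ℝ)) p.2 :=
    (hasDerivAt_const _ _).prodMk (hasDerivAt_id p.2)
  have h2 : HasFDerivAt f (fderiv ℝ f p) (p.1, p.2) := by
    simpa using (hf p).hasFDerivAt
  simpa [Function.comp_def] using h2.comp_hasDerivAt p.2 h1

lemma pt_hasDerivAt (f : ℝ × ℝ → ℝ) (hf : Differentiable ℝ f) (p : ℝ × ℝ) :
    HasDerivAt (fun s => f (s, p.2)) (pt f p) p.1 := by
  have h := pt_hasDerivAt' f hf p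
  have : pt f p = fderiv ℝ f p ((1 : ℝ), (0 : ℝ)) := h.deriv
  rw [this]; exact h

lemma px_hasDerivAt (f : ℝ × ℝ → ℝ) (hf : Differentiable ℝ f) (p : ℝ × ℝ) :
    HasDerivAt (fun s => f (p.1, s)) (px f p) p.2 := by
  have h := px_hasDerivAt' f hf p
  have : px f p = fderiv ℝ f p ((0 : ℝ), (1 : ℝ)) := h.deriv
  rw [this]; exact h

lemma pt_eq_fderiv (f : ℝ × ℝ → ℝ) (hf : Differentiable ℝ f) (p : ℝ × ℝ) :
    pt f p = fderiv ℝ f p ((1 : ℝ), (0 : ℝ)) := (pt_hasDerivAt' f hf p).deriv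

lemma px_eq_fderiv (f : ℝ × ℝ → ℝ) (hf : Differentiable ℝ f) (p : ℝ × ℝ) :
    px f p = fderiv ℝ f p ((0 : ℝ), (1 : ℝ)) := (px_hasDerivAt' f hf p).deriv

lemma contDiff_clm_apply (f : ℝ × ℝ → ℝ) (hf : ContDiff ℝ (⊤ : ℕ∞) f) (v : ℝ × ℝ) :
    ContDiff ℝ (⊤ : ℕ∞) (fun q => fderiv ℝ f q v) :=
  (hf.fderiv_right (le_refl _)).clm_apply contDiff_const

lemma pt_contDiff (f : ℝ × ℝ → ℝ) (hf : ContDiff ℝ (⊤ : ℕ∞) f) : ContDiff ℝ (⊤ : ℕ∞) (pt f) := by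
  have : pt f = fun q => fderiv ℝ f q ((1 : ℝ), (0 : ℝ)) := by
    funext q; exact pt_eq_fderiv f (hf.differentiable (by simp)) q
  rw [this]; exact contDiff_clm_apply f hf _

lemma px_contDiff (f : ℝ × ℝ → ℝ) (hf : ContDiff ℝ (⊤ : ℕ∞) f) : ContDiff ℝ (⊤ : ℕ∞) (px f) := by
  have : px f = fun q => fderiv ℝ f q ((0 : ℝ), (1 : ℝ)) := by
    funext q; exact px_eq_fderiv f (hf.differentiable (by simp)) q
  rw [this]; exact contDiff_clm_apply f hf _

/-- Clairaut: mixed partials commute for smooth functions. -/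
lemma clairaut (u : ℝ × ℝ → ℝ) (hu : ContDiff ℝ (⊤ : ℕ∞) u) (p : ℝ × ℝ) :
    px (pt u) p = pt (px u) p := by
  have hdiff : Differentiable ℝ u := hu.differentiable (by simp)
  have hfd : ContDiff ℝ (⊤ : ℕ∞) (fderiv ℝ u) := hu.fderiv_right (le_refl _)
  have hfdd : Differentiable ℝ (fderiv ℝ u) := hfd.differentiable (by simp)
  have hsym : ∀ v w : ℝ × ℝ,
      fderiv ℝ (fderiv ℝ u) p v w = fderiv ℝ (fderiv ℝ u) p w v := by
    intro v w
    exact second_derivative_symmetric (fun y => (hdiff y).hasFDerivAt)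
      (hfdd p).hasFDerivAt v w
  have key : ∀ v w : ℝ × ℝ,
      fderiv ℝ (fun q => fderiv ℝ u q w) p v = fderiv ℝ (fderiv ℝ u) p v w := by
    intro v w
    have := fderiv_clm_apply (c := fderiv ℝ u) (u := fun _ => w)
      (hfdd p) (differentiableAt_const w)
    rw [show (fun y => fderiv ℝ u y ((fun _ => w) y)) = fun q => fderiv ℝ u q w from rfl] at this
    rw [this]
    simp
  have hpt : pt u = fun q => fderiv ℝ u q ((1 : ℝ), (0 : ℝ)) := by
    funext q; exact pt_eq_fderiv u hdiff q
  have hpx : px u = fun q => fderiv ℝ u q ((0 : ℝ), (1 : ℝ)) := by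
    funext q; exact px_eq_fderiv u hdiff q
  have h1 : px (pt u) p = fderiv ℝ (pt u) p ((0 : ℝ), (1 : ℝ)) :=
    px_eq_fderiv (pt u) ((pt_contDiff u hu).differentiable (by simp)) p
  have h2 : pt (px u) p = fderiv ℝ (px u) p ((1 : ℝ), (0 : ℝ)) :=
    pt_eq_fderiv (px u) ((px_contDiff u hu).differentiable (by simp)) p
  rw [h1, h2, hpt, hpx, key _ _, key _ _, hsym]

/-- If a smooth `u` solves the short pulse equation everywhere, then
`D_t(u²) - (1/4) D_x(u⁴ + (u² u_x - 2 u_t)²) = 0` holds everywhere. -/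
theorem sp_conservation_square (u : ℝ × ℝ → ℝ) (hu : ContDiff ℝ (⊤ : ℕ∞) u)
    (hsp : ∀ p : ℝ × ℝ,
      pt (px u) p - u p - (1 / 2) * u p ^ 2 * px (px u) p - u p * (px u p) ^ 2 = 0) :
    ∀ p : ℝ × ℝ,
      pt (fun q => u q ^ 2) p
        - (1 / 4) * px (fun q => u q ^ 4 + (u q ^ 2 * px u q - 2 * pt u q) ^ 2) p = 0 := by
  intro p
  have hdiff : Differentiable ℝ u := hu.differentiable (by simp)
  have hptc : ContDiff ℝ (⊤ : ℕ∞) (pt u) := pt_contDiff u hu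
  have hpxc : ContDiff ℝ (⊤ : ℕ∞) (px u) := px_contDiff u hu
  -- derivative in t of u²
  have h1 : HasDerivAt (fun s => u (s, p.2)) (pt u p) p.1 := pt_hasDerivAt u hdiff p
  have hA : pt (fun q => u q ^ 2) p = 2 * u p * pt u p := by
    have := (h1.pow 2).deriv
    simpa [pt, Pi.pow_def] using this
  -- derivatives in x
  have h2 : HasDerivAt (fun s => u (p.1, s)) (px u p) p.2 := px_hasDerivAt u hdiff p
  have h3 : HasDerivAt (fun s => px u (p.1, s)) (px (px u) p) p.2 :=
    px_hasDerivAt (px u) (hpxc.differentiable (by simp)) p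
  have h4 : HasDerivAt (fun s => pt u (p.1, s)) (px (pt u) p) p.2 :=
    px_hasDerivAt (pt u) (hptc.differentiable (by simp)) p
  have hF : HasDerivAt
      (fun s => u (p.1, s) ^ 4 + (u (p.1, s) ^ 2 * px u (p.1, s) - 2 * pt u (p.1, s)) ^ 2)
      (((4 : ℕ) * u (p.1, p.2) ^ 3 * px u p)
        + ((2 : ℕ) * (u (p.1, p.2) ^ 2 * px u (p.1, p.2) - 2 * pt u (p.1, p.2)) ^ 1
          * ((((2 : ℕ) * u (p.1, p.2) ^ 1 * px u p) * px u (p.1, p.2)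
              + u (p.1, p.2) ^ 2 * px (px u) p) - 2 * px (pt u) p)))
      p.2 :=
    (h2.pow 4).add ((((h2.pow 2).mul h3).sub (h4.const_mul 2)).pow 2)
  have hB : px (fun q => u q ^ 4 + (u q ^ 2 * px u q - 2 * pt u q) ^ 2) p
      = ((4 : ℕ) * u (p.1, p.2) ^ 3 * px u p)
        + ((2 : ℕ) * (u (p.1, p.2) ^ 2 * px u (p.1, p.2) - 2 * pt u (p.1, p.2)) ^ 1
          * ((((2 : ℕ) * u (p.1, p.2) ^ 1 * px u p) * px u (p.1, p.2)
              + u (p.1, p.2) ^ 2 * px (px u) p) - 2 * px (pt u) p)) := by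
    simpa [px] using hF.deriv
  have hC : px (pt u) p = pt (px u) p := clairaut u hu p
  have hP : u (p.1, p.2) = u p := by simp
  rw [hA, hB, hC, hP]
  push_cast
  linear_combination (u p ^ 2 * px u p - 2 * pt u p) * hsp p
end
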